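/- Interpolation lemma: Let n_0 ∈ ℕ, p ≥ 1, and let U ⊂ ℝ^N be a bounded domain with smooth boundary. Suppose {φ_ε}_{ε>0} ⊂ W^{n_0,p}(U, ℝ^m) satisfies: ε^{n_0} ∇^{n_0} φ_ε → 0 in L^p(U) as ε→0⁺, and there is a constant C̄ > 0 with ∫_U |φ_ε|^p dx ≤ C̄ for all ε. Then for every j ∈ {1,...,n_0}, ε^j ∇^j φ_ε → 0 in L^p(U) as ε→0⁺. -/

import Mathlib

/-!
Write `A_k(ε) = ‖∇^k φ_ε‖_{L^p(U)}`. Applying the Gagliardo–Nirenberg inequality with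
`n = n₀` and `τ = s ε^{n₀-j}` gives
`ε^j A_j ≤ s ε^{n₀} ∑_k A_k + C₀ s^{-j/(n₀-j)} A_0`,
and for `ε ≤ 1` the term `ε^{n₀} ∑_k A_k` is at most `S_ε = ∑_k ε^k A_k`. Summing over `j < n₀`
with `s = 1/(2(n₀+1))` absorbs `S_ε` into the left-hand side, so `S_ε` stays bounded as `ε → 0⁺`
(the `A_k(ε)` are finite because `U` is bounded). Then `ε^{n₀} ∑_k A_k ≤ ε S_ε + ε^{n₀} A_{n₀} → 0`,
and letting first `ε → 0⁺` and then `s → ∞` in the rescaled inequality proves the claim.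
-/

open MeasureTheory Filter Set Topology
open scoped ENNReal NNReal

theorem Continuous.eLpNorm_restrict_lt_top_of_isBounded {X F : Type*} [MetricSpace X]
    [ProperSpace X] [MeasurableSpace X] [OpensMeasurableSpace X] {μ : Measure X}
    [IsFiniteMeasureOnCompacts μ] [NormedAddCommGroup F] {g : X → F} (hg : Continuous g)
    {U : Set X} (hU : Bornology.IsBounded U) (p : ℝ≥0∞) :
    eLpNorm g p (μ.restrict U) < ∞ := by
  have hK : IsCompact (closure U) := hU.isCompact_closure
  obtain ⟨M, hM⟩ := hK.exists_bound_of_continuousOn hg.continuousOn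
  calc eLpNorm g p (μ.restrict U) ≤ eLpNorm g p (μ.restrict (closure U)) :=
        eLpNorm_mono_measure g (Measure.restrict_mono subset_closure le_rfl)
    _ ≤ μ.restrict (closure U) univ ^ p.toReal⁻¹ * ENNReal.ofReal M :=
        eLpNorm_le_of_ae_bound (ae_restrict_of_forall_mem isClosed_closure.measurableSet hM)
    _ < ∞ := by
        rw [Measure.restrict_apply_univ]
        exact ENNReal.mul_lt_top
          (ENNReal.rpow_lt_top_of_nonneg (by positivity) hK.measure_lt_top.ne)
          ENNReal.ofReal_lt_top

theorem eLpNorm_smul_of_nonneg {α F : Type*} [MeasurableSpace α] [NormedAddCommGroup F]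
    [NormedSpace ℝ F] {c : ℝ} (hc : 0 ≤ c) (f : α → F) (p : ℝ≥0∞) (μ : Measure α) :
    eLpNorm (fun x => c • f x) p μ = ENNReal.ofReal c * eLpNorm f p μ := by
  rw [← Real.enorm_of_nonneg hc]
  exact eLpNorm_const_smul c f p μ

theorem ENNReal.le_two_mul_of_le_inv_two_mul_add {S D : ℝ≥0∞} (hS : S ≠ ∞)
    (h : S ≤ 2⁻¹ * S + D) : S ≤ 2 * D := by
  have hS2 : S / 2 ≠ ∞ := ENNReal.div_ne_top hS two_ne_zero
  have : S / 2 ≤ D := by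
    refine (ENNReal.add_le_add_iff_left hS2).1 ?_
    rw [ENNReal.add_halves]
    rwa [ENNReal.div_eq_inv_mul]
  calc S = 2 * (S / 2) := (ENNReal.mul_div_cancel two_ne_zero ENNReal.ofNat_ne_top).symm
    _ ≤ 2 * D := by gcongr

theorem tendsto_zero_of_forall_le_mul_add {α : Type*} {l : Filter α} {f Z : α → ℝ≥0∞}
    {c : ℝ → ℝ≥0∞} (hZ : Tendsto Z l (𝓝 0)) (hc : Tendsto c atTop (𝓝 0))
    (h : ∀ s : ℝ, 0 < s → ∀ᶠ x in l, f x ≤ ENNReal.ofReal s * Z x + c s) :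
    Tendsto f l (𝓝 0) := by
  rw [ENNReal.tendsto_nhds_zero]
  intro δ hδ
  have hδ2 : 0 < δ / 2 := ENNReal.half_pos hδ.ne'
  obtain ⟨s, hcs, hs⟩ := ((hc.eventually_lt_const hδ2).and (eventually_gt_atTop 0)).exists
  have hsZ : Tendsto (fun x => ENNReal.ofReal s * Z x) l (𝓝 0) := by
    simpa using ENNReal.Tendsto.const_mul hZ (Or.inr ENNReal.ofReal_ne_top)
  filter_upwards [h s hs, ENNReal.tendsto_nhds_zero.1 hsZ _ hδ2] with x hx hsZx
  calc f x ≤ ENNReal.ofReal s * Z x + c s := hx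
    _ ≤ δ / 2 + δ / 2 := add_le_add hsZx hcs.le
    _ = δ := ENNReal.add_halves δ

theorem tendsto_ofReal_mul_rpow_mul_atTop_of_neg (C₀ : ℝ) {C : ℝ≥0∞} (hC : C ≠ ∞) {γ : ℝ}
    (hγ : γ < 0) : Tendsto (fun s : ℝ => ENNReal.ofReal (C₀ * s ^ γ) * C) atTop (𝓝 0) := by
  have h : Tendsto (fun s : ℝ => s ^ γ) atTop (𝓝 0) := by
    simpa using tendsto_rpow_neg_atTop (neg_pos.2 hγ)
  replace h : Tendsto (fun s : ℝ => C₀ * s ^ γ) atTop (𝓝 0) := by simpa using h.const_mul C₀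
  simpa using ENNReal.Tendsto.mul_const (ENNReal.tendsto_ofReal h) (Or.inr hC)

theorem pow_mul_rpow_rescale {n j : ℕ} (hjn : j < n) {ε : ℝ} (hε : 0 < ε) {s : ℝ} (hs : 0 < s) :
    ε ^ j * (s * ε ^ (n - j)) ^ (-(j : ℝ) / ((n : ℝ) - j)) = s ^ (-(j : ℝ) / ((n : ℝ) - j)) := by
  have hnj : (n : ℝ) - j ≠ 0 := sub_ne_zero.2 (by exact_mod_cast hjn.ne')
  have hexp : ((n - j : ℕ) : ℝ) * (-(j : ℝ) / ((n : ℝ) - j)) = -j := by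
    rw [Nat.cast_sub hjn.le]
    field_simp
  rw [Real.mul_rpow hs.le (by positivity), ← Real.rpow_natCast ε (n - j), ← Real.rpow_mul hε.le,
    hexp, mul_left_comm, ← Real.rpow_natCast ε j, ← Real.rpow_add hε, add_neg_cancel,
    Real.rpow_zero, mul_one]

theorem ofReal_pow_mul_le_rescaled {n j : ℕ} (hjn : j < n) {ε : ℝ} (hε : 0 < ε) {C₀ : ℝ}
    {a b c : ℝ≥0∞}
    (h : ∀ τ : ℝ, 0 < τ →
      a ≤ ENNReal.ofReal τ * b + ENNReal.ofReal (C₀ * τ ^ (-(j : ℝ) / ((n : ℝ) - j))) * c)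
    {s : ℝ} (hs : 0 < s) :
    ENNReal.ofReal (ε ^ j) * a ≤ ENNReal.ofReal s * (ENNReal.ofReal (ε ^ n) * b) +
      ENNReal.ofReal (C₀ * s ^ (-(j : ℝ) / ((n : ℝ) - j))) * c := by
  have hεj : 0 ≤ ε ^ j := by positivity
  have hτ : ε ^ j * (s * ε ^ (n - j)) = s * ε ^ n := by
    rw [mul_left_comm, ← pow_add, Nat.add_sub_cancel' hjn.le]
  calc ENNReal.ofReal (ε ^ j) * a
      ≤ ENNReal.ofReal (ε ^ j) * (ENNReal.ofReal (s * ε ^ (n - j)) * b +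
          ENNReal.ofReal (C₀ * (s * ε ^ (n - j)) ^ (-(j : ℝ) / ((n : ℝ) - j))) * c) := by
        gcongr
        exact h _ (by positivity)
    _ = ENNReal.ofReal (ε ^ j * (s * ε ^ (n - j))) * b +
          ENNReal.ofReal (ε ^ j * (C₀ * (s * ε ^ (n - j)) ^ (-(j : ℝ) / ((n : ℝ) - j)))) * c := by
        rw [mul_add, ← mul_assoc, ← mul_assoc, ENNReal.ofReal_mul hεj, ENNReal.ofReal_mul hεj]
    _ = _ := by
        rw [hτ, mul_left_comm, pow_mul_rpow_rescale hjn hε hs, ENNReal.ofReal_mul hs.le, mul_assoc]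

section Interpolation

variable {n : ℕ} {A : ℕ → ℝ → ℝ≥0∞}

noncomputable def scaledSum (A : ℕ → ℝ → ℝ≥0∞) (n : ℕ) (ε : ℝ) : ℝ≥0∞ :=
  ∑ k ∈ Finset.range (n + 1), ENNReal.ofReal (ε ^ k) * A k ε

theorem scaledSum_ne_top {ε : ℝ} (hfin : ∀ k ≤ n, A k ε ≠ ∞) : scaledSum A n ε ≠ ∞ :=
  ENNReal.sum_ne_top.2 fun k hk =>
    ENNReal.mul_ne_top ENNReal.ofReal_ne_top (hfin k (Finset.mem_range_succ_iff.1 hk))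

theorem ofReal_pow_mul_sum_le_scaledSum {ε : ℝ} (hε : 0 ≤ ε) (hε1 : ε ≤ 1) :
    ENNReal.ofReal (ε ^ n) * ∑ k ∈ Finset.range (n + 1), A k ε ≤ scaledSum A n ε := by
  rw [scaledSum, Finset.mul_sum]
  refine Finset.sum_le_sum fun k hk => ?_
  gcongr ?_ * _
  exact ENNReal.ofReal_le_ofReal (pow_le_pow_of_le_one hε hε1 (Finset.mem_range_succ_iff.1 hk))

theorem ofReal_pow_mul_sum_le {ε : ℝ} (hε : 0 ≤ ε) (hε1 : ε ≤ 1) :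
    ENNReal.ofReal (ε ^ n) * ∑ k ∈ Finset.range (n + 1), A k ε ≤
      ENNReal.ofReal ε * scaledSum A n ε + ENNReal.ofReal (ε ^ n) * A n ε := by
  rw [Finset.sum_range_succ, mul_add]
  gcongr ?_ + _
  calc ENNReal.ofReal (ε ^ n) * ∑ k ∈ Finset.range n, A k ε
      ≤ ∑ k ∈ Finset.range n, ENNReal.ofReal ε * (ENNReal.ofReal (ε ^ k) * A k ε) := by
        rw [Finset.mul_sum]
        refine Finset.sum_le_sum fun k hk => ?_
        rw [← mul_assoc, ← ENNReal.ofReal_mul hε, ← pow_succ']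
        gcongr ?_ * _
        exact ENNReal.ofReal_le_ofReal (pow_le_pow_of_le_one hε hε1 (Finset.mem_range.1 hk))
    _ ≤ ENNReal.ofReal ε * scaledSum A n ε := by
        rw [← Finset.mul_sum, scaledSum, Finset.sum_range_succ]
        exact mul_le_mul_right le_self_add _

variable {C : ℝ≥0} {c : ℕ → ℝ → ℝ≥0∞}

theorem eventually_scaledSum_le (hc : ∀ j s, c j s ≠ ∞)
    (hfin : ∀ ε : ℝ, 0 < ε → ∀ k ≤ n, A k ε ≠ ∞) (h0 : ∀ ε : ℝ, 0 < ε → A 0 ε ≤ C)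
    (hrescaled : ∀ ε : ℝ, 0 < ε → ∀ j, 1 ≤ j → j < n → ∀ s : ℝ, 0 < s →
      ENNReal.ofReal (ε ^ j) * A j ε ≤
        ENNReal.ofReal s * (ENNReal.ofReal (ε ^ n) * ∑ k ∈ Finset.range (n + 1), A k ε) + c j s)
    (htop : ∀ᶠ ε in 𝓝[>] 0, ENNReal.ofReal (ε ^ n) * A n ε ≤ 1) :
    ∃ B ≠ ∞, ∀ᶠ ε in 𝓝[>] 0, scaledSum A n ε ≤ B := by
  -- With `s = θ`, the `n` copies of `θ S_ε` add up to at most `S_ε / 2`.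
  set θ : ℝ := (2 * (n + 1))⁻¹
  set K : ℝ≥0∞ := ∑ j ∈ Finset.range n, (c j θ + C)
  have hnθ : (n : ℝ≥0∞) * ENNReal.ofReal θ ≤ 2⁻¹ := by
    rw [← ENNReal.ofReal_natCast, ← ENNReal.ofReal_mul n.cast_nonneg, ← ENNReal.ofReal_ofNat 2,
      ← ENNReal.ofReal_inv_of_pos two_pos]
    refine ENNReal.ofReal_le_ofReal ?_
    rw [mul_inv_le_iff₀ (by positivity)]
    linarith
  have hK : K ≠ ∞ := ENNReal.sum_ne_top.2 fun j _ => by finiteness [hc j θ]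
  refine ⟨2 * (K + 1), by finiteness, ?_⟩
  filter_upwards [self_mem_nhdsWithin, Ioo_mem_nhdsGT one_pos, htop] with ε hε hε1 htopε
  have hterm : ∀ j ∈ Finset.range n,
      ENNReal.ofReal (ε ^ j) * A j ε ≤ ENNReal.ofReal θ * scaledSum A n ε + (c j θ + C) := by
    intro j hj
    rcases Nat.eq_zero_or_pos j with rfl | hj0
    · simpa using le_add_left (le_add_left (h0 ε hε))
    calc ENNReal.ofReal (ε ^ j) * A j ε
        ≤ ENNReal.ofReal θ * (ENNReal.ofReal (ε ^ n) * ∑ k ∈ Finset.range (n + 1), A k ε) +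
            c j θ := hrescaled ε hε j hj0 (Finset.mem_range.1 hj) θ (by positivity)
      _ ≤ ENNReal.ofReal θ * scaledSum A n ε + c j θ := by
        gcongr
        exact ofReal_pow_mul_sum_le_scaledSum hε.le hε1.2.le
      _ ≤ _ := by rw [← add_assoc]; exact le_self_add
  refine ENNReal.le_two_mul_of_le_inv_two_mul_add
    (scaledSum_ne_top fun k hk => hfin ε hε k hk) ?_
  calc scaledSum A n ε
      = ∑ j ∈ Finset.range n, ENNReal.ofReal (ε ^ j) * A j ε +
          ENNReal.ofReal (ε ^ n) * A n ε := Finset.sum_range_succ _ _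
    _ ≤ ∑ j ∈ Finset.range n, (ENNReal.ofReal θ * scaledSum A n ε + (c j θ + C)) + 1 := by
        gcongr with j hj
        exact hterm j hj
    _ = n * ENNReal.ofReal θ * scaledSum A n ε + (K + 1) := by
        rw [Finset.sum_add_distrib, Finset.sum_const, Finset.card_range, nsmul_eq_mul]
        ring
    _ ≤ 2⁻¹ * scaledSum A n ε + (K + 1) := by gcongr

theorem tendsto_ofReal_pow_mul_sum {B : ℝ≥0∞} (hB : B ≠ ∞)
    (hS : ∀ᶠ ε in 𝓝[>] 0, scaledSum A n ε ≤ B)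
    (htop : Tendsto (fun ε : ℝ => ENNReal.ofReal (ε ^ n) * A n ε) (𝓝[>] 0) (𝓝 0)) :
    Tendsto (fun ε : ℝ => ENNReal.ofReal (ε ^ n) * ∑ k ∈ Finset.range (n + 1), A k ε)
      (𝓝[>] 0) (𝓝 0) := by
  have hεB : Tendsto (fun ε : ℝ => ENNReal.ofReal ε * B) (𝓝[>] 0) (𝓝 0) := by
    have h : Tendsto ENNReal.ofReal (𝓝[>] 0) (𝓝 0) := by
      simpa using (ENNReal.continuous_ofReal.tendsto 0).mono_left nhdsWithin_le_nhds
    simpa using ENNReal.Tendsto.mul_const h (Or.inr hB)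
  refine tendsto_of_tendsto_of_tendsto_of_le_of_le' tendsto_const_nhds
    (by simpa using hεB.add htop) (Eventually.of_forall fun _ => zero_le) ?_
  filter_upwards [self_mem_nhdsWithin, Ioo_mem_nhdsGT one_pos, hS] with ε hε hε1 hSε
  calc ENNReal.ofReal (ε ^ n) * ∑ k ∈ Finset.range (n + 1), A k ε
      ≤ ENNReal.ofReal ε * scaledSum A n ε + ENNReal.ofReal (ε ^ n) * A n ε :=
        ofReal_pow_mul_sum_le (le_of_lt hε) hε1.2.le
    _ ≤ ENNReal.ofReal ε * B + ENNReal.ofReal (ε ^ n) * A n ε := by gcongr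

theorem tendsto_ofReal_pow_mul_of_interpolation {C₀ : ℝ}
    (hfin : ∀ ε : ℝ, 0 < ε → ∀ k ≤ n, A k ε ≠ ∞) (h0 : ∀ ε : ℝ, 0 < ε → A 0 ε ≤ C)
    (hGN : ∀ ε : ℝ, 0 < ε → ∀ j, 1 ≤ j → j < n → ∀ τ : ℝ, 0 < τ →
      A j ε ≤ ENNReal.ofReal τ * ∑ k ∈ Finset.range (n + 1), A k ε +
        ENNReal.ofReal (C₀ * τ ^ (-(j : ℝ) / ((n : ℝ) - j))) * A 0 ε)
    (htop : Tendsto (fun ε : ℝ => ENNReal.ofReal (ε ^ n) * A n ε) (𝓝[>] 0) (𝓝 0))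
    (j : ℕ) (hj : 1 ≤ j) (hjn : j ≤ n) :
    Tendsto (fun ε : ℝ => ENNReal.ofReal (ε ^ j) * A j ε) (𝓝[>] 0) (𝓝 0) := by
  rcases hjn.eq_or_lt with rfl | hjn
  · exact htop
  have hrescaled : ∀ ε : ℝ, 0 < ε → ∀ i, 1 ≤ i → i < n → ∀ s : ℝ, 0 < s →
      ENNReal.ofReal (ε ^ i) * A i ε ≤
        ENNReal.ofReal s * (ENNReal.ofReal (ε ^ n) * ∑ k ∈ Finset.range (n + 1), A k ε) +
          ENNReal.ofReal (C₀ * s ^ (-(i : ℝ) / ((n : ℝ) - i))) * C := by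
    intro ε hε i hi hin s hs
    calc _ ≤ _ := ofReal_pow_mul_le_rescaled hin hε (hGN ε hε i hi hin) hs
      _ ≤ _ := by gcongr; exact h0 ε hε
  obtain ⟨B, hB, hSB⟩ := eventually_scaledSum_le (fun _ _ => by finiteness) hfin h0 hrescaled
    (ENNReal.tendsto_nhds_zero.1 htop 1 one_pos)
  have hγ : -(j : ℝ) / ((n : ℝ) - j) < 0 :=
    div_neg_of_neg_of_pos (neg_lt_zero.2 (Nat.cast_pos.2 hj)) (sub_pos.2 (by exact_mod_cast hjn))
  refine tendsto_zero_of_forall_le_mul_add (tendsto_ofReal_pow_mul_sum hB hSB htop)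
    (tendsto_ofReal_mul_rpow_mul_atTop_of_neg C₀ (ENNReal.coe_ne_top (r := C)) hγ)
    fun s hs => ?_
  filter_upwards [self_mem_nhdsWithin] with ε hε
  exact hrescaled ε hε j hj hjn s hs

end Interpolation

theorem stmt5_general {N m : ℕ} (n₀ : ℕ) (p : ENNReal)
    (U : Set (EuclideanSpace ℝ (Fin N))) (hUb : Bornology.IsBounded U)
    (hGN : ∃ C₀ : ℝ, 0 < C₀ ∧
      ∀ σ : EuclideanSpace ℝ (Fin N) → EuclideanSpace ℝ (Fin m),
        ContDiff ℝ (n₀ : ℕ∞) σ → ∀ n : ℕ, 2 ≤ n → n ≤ n₀ → ∀ j : ℕ, 1 ≤ j → j < n →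
        ∀ τ : ℝ, 0 < τ →
        eLpNorm (iteratedFDeriv ℝ j σ) p (volume.restrict U) ≤
          ENNReal.ofReal τ *
            (∑ k ∈ Finset.range (n + 1), eLpNorm (iteratedFDeriv ℝ k σ) p (volume.restrict U)) +
          ENNReal.ofReal (C₀ * τ ^ (-(j : ℝ) / ((n : ℝ) - (j : ℝ)))) *
            eLpNorm σ p (volume.restrict U))
    (φ : ℝ → EuclideanSpace ℝ (Fin N) → EuclideanSpace ℝ (Fin m))
    (hφ : ∀ ε : ℝ, 0 < ε → ContDiff ℝ (n₀ : ℕ∞) (φ ε))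
    (C : NNReal)
    (hbound : ∀ ε : ℝ, 0 < ε → eLpNorm (φ ε) p (volume.restrict U) ≤ C)
    (htop : Tendsto (fun ε : ℝ =>
        eLpNorm (fun x => ε ^ n₀ • iteratedFDeriv ℝ n₀ (φ ε) x) p (volume.restrict U))
      (nhdsWithin 0 (Set.Ioi 0)) (nhds 0)) :
    ∀ j : ℕ, 1 ≤ j → j ≤ n₀ →
      Tendsto (fun ε : ℝ =>
        eLpNorm (fun x => ε ^ j • iteratedFDeriv ℝ j (φ ε) x) p (volume.restrict U))
      (nhdsWithin 0 (Set.Ioi 0)) (nhds 0) := by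
  obtain ⟨C₀, -, hGN⟩ := hGN
  set A : ℕ → ℝ → ℝ≥0∞ := fun k ε => eLpNorm (iteratedFDeriv ℝ k (φ ε)) p (volume.restrict U)
  have hA0 : ∀ ε, A 0 ε = eLpNorm (φ ε) p (volume.restrict U) := fun ε =>
    eLpNorm_congr_norm_ae (ae_of_all _ fun _ => norm_iteratedFDeriv_zero)
  have hsmul : ∀ j, ∀ ε ∈ Ioi (0 : ℝ),
      ENNReal.ofReal (ε ^ j) * A j ε =
        eLpNorm (fun x => ε ^ j • iteratedFDeriv ℝ j (φ ε) x) p (volume.restrict U) :=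
    fun j ε hε => (eLpNorm_smul_of_nonneg (pow_nonneg (le_of_lt hε) j) _ _ _).symm
  have hinterp := tendsto_ofReal_pow_mul_of_interpolation (A := A) (C := C)
    (fun ε hε k hk => (((hφ ε hε).continuous_iteratedFDeriv (by exact_mod_cast hk))
      |>.eLpNorm_restrict_lt_top_of_isBounded hUb p).ne)
    (fun ε hε => (hA0 ε).trans_le (hbound ε hε))
    (fun ε hε j hj hjn τ hτ => hA0 ε ▸ hGN (φ ε) (hφ ε hε) n₀ (by omega) le_rfl j hj hjn τ hτ)
    (htop.congr' (eventually_nhdsWithin_of_forall fun ε hε => (hsmul n₀ ε hε).symm))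
  exact fun j hj hjn =>
    (hinterp j hj hjn).congr' (eventually_nhdsWithin_of_forall (hsmul j))

/-- Interpolation lemma: if `ε^{n₀} ∇^{n₀} φ_ε → 0` in `L^p(U)` and `φ_ε` is bounded in
`L^p(U)`, then `ε^j ∇^j φ_ε → 0` in `L^p(U)` for every `1 ≤ j ≤ n₀`.  The bounded smooth
domain `U` enters through the Gagliardo–Nirenberg interpolation inequality `hGN`. -/
theorem stmt5 {N m : ℕ} (n₀ : ℕ) (hn₀ : 1 ≤ n₀) (p : ENNReal) (hp : 1 ≤ p) (hp' : p ≠ ⊤)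
    (U : Set (EuclideanSpace ℝ (Fin N))) (hU : IsOpen U) (hUb : Bornology.IsBounded U)
    (hGN : ∃ C₀ : ℝ, 0 < C₀ ∧
      ∀ σ : EuclideanSpace ℝ (Fin N) → EuclideanSpace ℝ (Fin m),
        ContDiff ℝ (n₀ : ℕ∞) σ → ∀ n : ℕ, 2 ≤ n → n ≤ n₀ → ∀ j : ℕ, 1 ≤ j → j < n →
        ∀ τ : ℝ, 0 < τ →
        eLpNorm (iteratedFDeriv ℝ j σ) p (volume.restrict U) ≤
          ENNReal.ofReal τ *
            (∑ k ∈ Finset.range (n + 1), eLpNorm (iteratedFDeriv ℝ k σ) p (volume.restrict U)) +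
          ENNReal.ofReal (C₀ * τ ^ (-(j : ℝ) / ((n : ℝ) - (j : ℝ)))) *
            eLpNorm σ p (volume.restrict U))
    (φ : ℝ → EuclideanSpace ℝ (Fin N) → EuclideanSpace ℝ (Fin m))
    (hφ : ∀ ε : ℝ, 0 < ε → ContDiff ℝ (n₀ : ℕ∞) (φ ε))
    (C : NNReal)
    (hbound : ∀ ε : ℝ, 0 < ε → eLpNorm (φ ε) p (volume.restrict U) ≤ C)
    (htop : Tendsto (fun ε : ℝ =>
        eLpNorm (fun x => ε ^ n₀ • iteratedFDeriv ℝ n₀ (φ ε) x) p (volume.restrict U))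
      (nhdsWithin 0 (Set.Ioi 0)) (nhds 0)) :
    ∀ j : ℕ, 1 ≤ j → j ≤ n₀ →
      Tendsto (fun ε : ℝ =>
        eLpNorm (fun x => ε ^ j • iteratedFDeriv ℝ j (φ ε) x) p (volume.restrict U))
      (nhdsWithin 0 (Set.Ioi 0)) (nhds 0) :=
  stmt5_general n₀ p U hUb hGN φ hφ C hbound htop
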